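/- arXiv:2506.23799 — 5 statements merged into one kernel-verified Lean document; each statement's English description precedes it below -/
import Mathlib

section
/- Let P and Q be probability measures on X such that φ is Bochner integrable with respect to both, with mean embeddings μ_P := ∫ φ dP and μ_Q := ∫ φ dQ (no assumption that μ_P ≠ μ_Q). Fix x ∈ X, and for ε ∈ [0,1) let Q_ε := (1−ε)Q + εδ_x, whose mean embedding equals (1−ε)μ_Q + εφ(x). Then the limit lim_{ε→0⁺} (MMD²(P, Q_ε) − MMD²(P, Q))/ε exists and equals 2⟨μ_P − μ_Q, μ_Q − φ(x)⟩. Equivalently, the influence IF_{MMD²}(x; P, Q) := −lim_{ε→0⁺} (MMD²(P, Q_ε) − MMD²(P, Q))/ε equals 2(⟨μ_P, φ(x)⟩ − ⟨μ_Q, φ(x)⟩) − 2(⟨μ_P, μ_Q⟩ − ‖μ_Q‖²), i.e., up to an additive constant independent of x and the positive factor 2, it equals E_{x'∼P}[k(x', x)] − E_{x'∼Q}[k(x', x)]. -/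
open MeasureTheory Filter Topology
open scoped ENNReal RealInnerProductSpace

/-- The one-sided limit defining the distributional influence for MMD² exists
and equals 2⟨μP − μQ, μQ − φ(x)⟩; equivalently its negative is, up to constants, the
kernel expectation gap. -/
theorem mmd_sq_influence_closed_form
    {X : Type*} [MeasurableSpace X]
    {H : Type*} [NormedAddCommGroup H] [InnerProductSpace ℝ H] [CompleteSpace H]
    [MeasurableSpace H] [BorelSpace H]
    (φ : X → H) (hφ : Measurable φ) (C : ℝ) (hC : ∀ x, ‖φ x‖ ≤ C)
    (P Q : Measure X) [IsProbabilityMeasure P] [IsProbabilityMeasure Q]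
    (hPint : Integrable φ P) (hQint : Integrable φ Q)
    (μP μQ : H) (hμP : μP = ∫ x', φ x' ∂P) (hμQ : μQ = ∫ x', φ x' ∂Q)
    (x : X)
    (Qe : ℝ → Measure X)
    (hQe : ∀ ε ∈ Set.Ico (0 : ℝ) 1,
      Qe ε = ENNReal.ofReal (1 - ε) • Q + ENNReal.ofReal ε • Measure.dirac x)
    (hQeEmb : ∀ ε ∈ Set.Ico (0 : ℝ) 1,
      (∫ x', φ x' ∂(Qe ε)) = (1 - ε) • μQ + ε • φ x) :
    (Tendsto
      (fun ε : ℝ =>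
        (‖(∫ x', φ x' ∂P) - ∫ x', φ x' ∂(Qe ε)‖ ^ 2 - ‖μP - μQ‖ ^ 2) / ε)
      (𝓝[>] (0 : ℝ))
      (𝓝 (2 * ⟪μP - μQ, μQ - φ x⟫)))
    ∧ -(2 * ⟪μP - μQ, μQ - φ x⟫)
        = 2 * (⟪μP, φ x⟫ - ⟪μQ, φ x⟫) - 2 * (⟪μP, μQ⟫ - ‖μQ‖ ^ 2)
    ∧ ⟪μP, φ x⟫ = ∫ x', ⟪φ x', φ x⟫ ∂P
    ∧ ⟪μQ, φ x⟫ = ∫ x', ⟪φ x', φ x⟫ ∂Q := by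
  refine ⟨?_, ?_, ?_, ?_⟩
  · -- main limit
    have hg : Tendsto (fun ε : ℝ => 2 * ⟪μP - μQ, μQ - φ x⟫ + ε * ‖φ x - μQ‖ ^ 2)
        (𝓝[>] (0 : ℝ)) (𝓝 (2 * ⟪μP - μQ, μQ - φ x⟫)) := by
      have : Tendsto (fun ε : ℝ => 2 * ⟪μP - μQ, μQ - φ x⟫ + ε * ‖φ x - μQ‖ ^ 2)
          (𝓝 (0 : ℝ)) (𝓝 (2 * ⟪μP - μQ, μQ - φ x⟫ + 0 * ‖φ x - μQ‖ ^ 2)) := by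
        exact (tendsto_const_nhds.add ((tendsto_id).mul tendsto_const_nhds))
      simpa using this.mono_left nhdsWithin_le_nhds
    refine hg.congr' ?_
    have hmem : Set.Ioo (0 : ℝ) 1 ∈ 𝓝[>] (0 : ℝ) :=
      Ioo_mem_nhdsGT_of_mem (by constructor <;> norm_num)
    filter_upwards [hmem] with ε hε
    have hε' : ε ∈ Set.Ico (0 : ℝ) 1 := ⟨le_of_lt hε.1, hε.2⟩
    rw [hQeEmb ε hε', ← hμP]
    have hrw : μP - ((1 - ε) • μQ + ε • φ x) = (μP - μQ) - ε • (φ x - μQ) := by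
      rw [sub_smul, one_smul, smul_sub]
      abel
    rw [hrw]
    have hnorm : ‖(μP - μQ) - ε • (φ x - μQ)‖ ^ 2
        = ‖μP - μQ‖ ^ 2 - 2 * (ε * ⟪μP - μQ, φ x - μQ⟫) + ε ^ 2 * ‖φ x - μQ‖ ^ 2 := by
      rw [norm_sub_sq_real, real_inner_smul_right, norm_smul]
      simp [mul_pow, abs_of_pos hε.1]
    rw [hnorm]
    have hinner : ⟪μP - μQ, μQ - φ x⟫ = -⟪μP - μQ, φ x - μQ⟫ := by
      rw [← inner_neg_right]; congr 1; abel
    rw [hinner, eq_div_iff (ne_of_gt hε.1)]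
    ring
  · -- algebraic identity
    simp only [inner_sub_left, inner_sub_right, real_inner_self_eq_norm_sq]
    ring
  · rw [hμP, real_inner_comm, ← integral_inner hPint (φ x)]
    exact integral_congr_ae (Filter.Eventually.of_forall fun x' => real_inner_comm _ _)
  · rw [hμQ, real_inner_comm, ← integral_inner hQint (φ x)]
    exact integral_congr_ae (Filter.Eventually.of_forall fun x' => real_inner_comm _ _)
end

section
/- Let x_1, …, x_N ∈ X be training points with N ≥ 3 and v_1, …, v_n ∈ X validation points with n ≥ 1, and assume the kernel is normalized so that k(x, x) = ‖φ(x)‖² = 1 for all x ∈ X. For a nonempty subset T of indices {1, …, N}, define the empirical MMD as MMD̂(D_val, T) := ‖(1/n)·Σ_{j=1}^n φ(v_j) − (1/|T|)·Σ_{l∈T} φ(x_l)‖_H, and for each index i define the empirical influence IF̂(x_i) := (1/n)·Σ_{j=1}^n k(v_j, x_i) − (1/(N−1))·Σ_{l≠i} k(x_l, x_i). Fix distinct indices i and j. If for every nonempty subset S ⊆ {1, …, N} \ {i, j} one has MMD̂(D_val, S ∪ {i}) − MMD̂(D_val, S) = MMD̂(D_val, S ∪ {j}) − MMD̂(D_val,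 S), then IF̂(x_i) = IF̂(x_j). -/
open scoped RealInnerProductSpace

/-- Symmetry: if two training points make identical marginal contributions
to the empirical MMD over all nonempty subsets avoiding both, their empirical influence
scores coincide. -/
theorem empirical_mmd_symmetry
    {X : Type*} {H : Type*} [NormedAddCommGroup H] [InnerProductSpace ℝ H]
    (φ : X → H) (N n : ℕ) (hN : 3 ≤ N) (hn : 1 ≤ n)
    (x : Fin N → X) (v : Fin n → X)
    (hnorm : ∀ y : X, ‖φ y‖ = 1)
    (emmd : Finset (Fin N) → ℝ)
    (hemmd : ∀ T : Finset (Fin N), T.Nonempty →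
      emmd T = ‖(1 / (n : ℝ)) • ∑ j, φ (v j)
        - (1 / (T.card : ℝ)) • ∑ l ∈ T, φ (x l)‖)
    (IFhat : Fin N → ℝ)
    (hIF : ∀ i : Fin N, IFhat i
      = (1 / (n : ℝ)) * ∑ j, ⟪φ (v j), φ (x i)⟫
        - (1 / ((N : ℝ) - 1)) * ∑ l ∈ Finset.univ.erase i, ⟪φ (x l), φ (x i)⟫)
    (i j : Fin N) (hij : i ≠ j)
    (hsym : ∀ S : Finset (Fin N), S ⊆ Finset.univ \ {i, j} → S.Nonempty →
      emmd (insert i S) - emmd S = emmd (insert j S) - emmd S) :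
    IFhat i = IFhat j := by
  classical
  set m : H := (1 / (n : ℝ)) • ∑ j, φ (v j) with hm
  set T : H := ∑ l, φ (x l) with hT
  have hNR : (3:ℝ) ≤ (N:ℝ) := by exact_mod_cast hN
  have hc : ((N : ℝ) - 1) ≠ 0 := by linarith
  set c : ℝ := 1 / ((N : ℝ) - 1) with hcdef
  set S : Finset (Fin N) := Finset.univ \ {i, j} with hS
  have hScard : S.card = N - 2 := by
    rw [hS, Finset.card_sdiff_of_subset (Finset.subset_univ _), Finset.card_univ,
      Finset.card_insert_of_notMem (by simpa using hij), Finset.card_singleton,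
      Fintype.card_fin]
  have hSne : S.Nonempty := Finset.card_pos.mp (by omega)
  have hkey := hsym S (le_refl _) hSne
  have hinsi : insert i S = Finset.univ.erase j := by
    ext a
    simp only [hS, Finset.mem_insert, Finset.mem_sdiff, Finset.mem_univ, true_and,
      Finset.mem_erase, Finset.mem_singleton, and_true]
    by_cases h : a = i <;> simp [h, hij] <;> tauto
  have hinsj : insert j S = Finset.univ.erase i := by
    ext a
    simp only [hS, Finset.mem_insert, Finset.mem_sdiff, Finset.mem_univ, true_and,
      Finset.mem_erase, Finset.mem_singleton, and_true]
    by_cases h : a = j <;> simp [h, Ne.symm hij] <;> tauto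
  have hcardE : ∀ a : Fin N, ((Finset.univ.erase a).card : ℝ) = (N : ℝ) - 1 := by
    intro a
    rw [Finset.card_erase_of_mem (Finset.mem_univ a), Finset.card_univ, Fintype.card_fin]
    have : 1 ≤ N := by omega
    push_cast [Nat.cast_sub this]
    ring
  have hsumE : ∀ a : Fin N, ∑ l ∈ Finset.univ.erase a, φ (x l) = T - φ (x a) := by
    intro a
    rw [hT, Finset.sum_erase_eq_sub (Finset.mem_univ a)]
  have hEi : emmd (insert i S) = ‖m - c • (T - φ (x j))‖ := by
    rw [hinsi, hemmd _ ⟨i, by simp [Finset.mem_erase, hij]⟩, hcardE, hsumE]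
  have hEj : emmd (insert j S) = ‖m - c • (T - φ (x i))‖ := by
    rw [hinsj, hemmd _ ⟨j, by simp [Finset.mem_erase, Ne.symm hij]⟩, hcardE, hsumE]
  have hnormeq : ‖m - c • (T - φ (x j))‖ = ‖m - c • (T - φ (x i))‖ := by
    rw [← hEi, ← hEj]; linarith
  have hsq : ‖m - c • (T - φ (x j))‖ ^ 2 = ‖m - c • (T - φ (x i))‖ ^ 2 := by
    rw [hnormeq]
  -- expand squares
  have expand : ∀ w : H, ‖m - c • (T - w)‖ ^ 2
      = ‖m‖ ^ 2 - 2 * c * (⟪m, T⟫ - ⟪m, w⟫)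
        + c ^ 2 * (‖T‖ ^ 2 - 2 * ⟪T, w⟫ + ‖w‖ ^ 2) := by
    intro w
    have h3 : ‖c • (T - w)‖ ^ 2 = c ^ 2 * ‖T - w‖ ^ 2 := by
      rw [norm_smul, mul_pow, Real.norm_eq_abs, sq_abs]
    rw [norm_sub_sq_real m (c • (T - w)), h3, norm_sub_sq_real T w,
      real_inner_smul_right, inner_sub_right]
    ring
  rw [expand, expand] at hsq
  have hni : ‖φ (x i)‖ = 1 := hnorm _
  have hnj : ‖φ (x j)‖ = 1 := hnorm _
  rw [hni, hnj] at hsq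
  -- rewrite IFhat
  have hIFval : ∀ a : Fin N, IFhat a = ⟪m, φ (x a)⟫ - c * (⟪T, φ (x a)⟫ - 1) := by
    intro a
    rw [hIF a]
    have h1 : ⟪m, φ (x a)⟫ = 1 / (n : ℝ) * ∑ j, ⟪φ (v j), φ (x a)⟫ := by
      rw [hm, real_inner_smul_left, sum_inner]
    have h2 : ∑ l ∈ Finset.univ.erase a, ⟪φ (x l), φ (x a)⟫ = ⟪T, φ (x a)⟫ - 1 := by
      rw [← sum_inner, hsumE a, inner_sub_left, real_inner_self_eq_norm_sq, hnorm]
      ring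
    rw [h1, h2]
  rw [hIFval, hIFval]
  have hcpos : 0 < c := by
    rw [hcdef]
    exact div_pos one_pos (by linarith)
  have h2 : ⟪m, φ (x j)⟫ - c * ⟪T, φ (x j)⟫ = ⟪m, φ (x i)⟫ - c * ⟪T, φ (x i)⟫ := by
    have := hsq
    nlinarith [hcpos]
  linarith
end

section
/- Let n ≥ 1 and let p, q : ℝⁿ → ℝ be measurable probability density functions with respect to Lebesgue measure (nonnegative with ∫ p = ∫ q = 1) satisfying |p(x') − q(x')| ≤ 1 for all x' ∈ ℝⁿ. Then for every ε > 0 and r > 0 there exists σ > 0 such that, defining IF(x) := ∫_{ℝⁿ} (p(x') − q(x'))·k_σ(x, x') dx', every x ∈ ℝⁿ satisfies: if p(x') − q(x') ≥ ε for all x' ∈ B(x, r), then IF(x) > 0; and if p(x') − q(x') ≤ −ε for all x' ∈ B(x, r), then IF(x) < 0. -/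
open MeasureTheory Real


lemma gauss_integrable (n : ℕ) {b : ℝ} (hb : 0 < b) :
    Integrable (fun v : EuclideanSpace ℝ (Fin n) => rexp (-b * ‖v‖ ^ 2)) := by
  have h := (GaussianFourier.integrable_cexp_neg_mul_sq_norm_add
    (V := EuclideanSpace ℝ (Fin n)) (b := (b : ℂ)) (by simpa using hb) 0 0).norm
  simpa [Complex.norm_exp, ← Complex.ofReal_pow] using h

lemma gauss_integral (n : ℕ) {b : ℝ} (hb : 0 < b) :
    ∫ v : EuclideanSpace ℝ (Fin n), rexp (-b * ‖v‖ ^ 2) = (π / b) ^ ((n : ℝ) / 2) := by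
  rw [GaussianFourier.integral_rexp_neg_mul_sq_norm hb]
  norm_num [finrank_euclideanSpace_fin]

lemma gauss_integral' (n : ℕ) {b : ℝ} (hb : 0 < b) (x : EuclideanSpace ℝ (Fin n)) :
    ∫ x' : EuclideanSpace ℝ (Fin n), rexp (-b * ‖x - x'‖ ^ 2) = (π / b) ^ ((n : ℝ) / 2) := by
  rw [integral_sub_left_eq_self (fun v => rexp (-b * ‖v‖ ^ 2)) volume x]
  exact gauss_integral n hb

lemma gauss_integrable' (n : ℕ) {b : ℝ} (hb : 0 < b) (x : EuclideanSpace ℝ (Fin n)) :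
    Integrable (fun x' : EuclideanSpace ℝ (Fin n) => rexp (-b * ‖x - x'‖ ^ 2)) :=
  (gauss_integrable n hb).comp_sub_left x

lemma key_pos (n : ℕ) {σ r ε : ℝ} (hσ : 0 < σ) (hr : 0 < r) (hε : 0 < ε)
    (htail : (2 : ℝ) ^ ((n : ℝ) / 2) * rexp (-r ^ 2 / (4 * σ ^ 2)) < ε / (2 * (1 + ε)))
    (f : EuclideanSpace ℝ (Fin n) → ℝ) (hfm : Measurable f) (hbd : ∀ x', |f x'| ≤ 1)
    (x : EuclideanSpace ℝ (Fin n)) (hball : ∀ x' ∈ Metric.ball x r, ε ≤ f x') :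
    0 < ∫ x', f x' * ((2 * π * σ ^ 2) ^ (-(n : ℝ) / 2) *
      rexp (-‖x - x'‖ ^ 2 / (2 * σ ^ 2))) := by
  have hπ : (0 : ℝ) < π := pi_pos
  have hbase : (0 : ℝ) < 2 * π * σ ^ 2 := by positivity
  set C : ℝ := (2 * π * σ ^ 2) ^ (-(n : ℝ) / 2) with hC
  have hC0 : 0 < C := rpow_pos_of_pos hbase _
  set g : EuclideanSpace ℝ (Fin n) → ℝ :=
    fun x' => C * rexp (-‖x - x'‖ ^ 2 / (2 * σ ^ 2)) with hg
  have hb1 : (0 : ℝ) < 1 / (2 * σ ^ 2) := by positivity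
  have hb2 : (0 : ℝ) < 1 / (4 * σ ^ 2) := by positivity
  have hgform : ∀ x', g x' = C * rexp (-(1 / (2 * σ ^ 2)) * ‖x - x'‖ ^ 2) := by
    intro x'; simp only [hg]; ring_nf
  have hg0 : ∀ x', 0 ≤ g x' := fun x' => by positivity
  have hgint : Integrable g := by
    simp only [funext hgform]
    exact (gauss_integrable' n hb1 x).const_mul C
  have hgm : Measurable g := by fun_prop
  -- total mass 1
  have hgtot : ∫ x', g x' = 1 := by
    simp only [funext hgform]
    rw [integral_const_mul, gauss_integral' n hb1 x]
    have : π / (1 / (2 * σ ^ 2)) = 2 * π * σ ^ 2 := by field_simp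
    rw [this, hC, ← Real.rpow_add hbase,
      show (-(n : ℝ) / 2 + (n : ℝ) / 2) = 0 by ring, Real.rpow_zero]
  -- integrability of f * g
  have hfg : Integrable (fun x' => f x' * g x') := by
    refine Integrable.mono hgint ((hfm.mul hgm).aestronglyMeasurable) ?_
    filter_upwards with x'
    rw [Real.norm_eq_abs, Real.norm_eq_abs, abs_mul, abs_of_nonneg (hg0 x')]
    nlinarith [hg0 x', abs_nonneg (f x'), hbd x']
  -- tail bound
  set B := Metric.ball x r
  set t : ℝ := ∫ x' in Bᶜ, g x'
  have ht0 : 0 ≤ t := setIntegral_nonneg measurableSet_ball.compl fun x' _ => hg0 x'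
  have hmaj : Integrable (fun x' => C * rexp (-r ^ 2 / (4 * σ ^ 2)) *
      rexp (-(1 / (4 * σ ^ 2)) * ‖x - x'‖ ^ 2)) :=
    (gauss_integrable' n hb2 x).const_mul _
  have htail2 : t < ε / (2 * (1 + ε)) := by
    have h1 : t ≤ ∫ x' in Bᶜ, C * rexp (-r ^ 2 / (4 * σ ^ 2)) *
        rexp (-(1 / (4 * σ ^ 2)) * ‖x - x'‖ ^ 2) := by
      refine setIntegral_mono_on hgint.integrableOn hmaj.integrableOn
        measurableSet_ball.compl ?_
      intro x' hx'
      have hrle : r ≤ ‖x - x'‖ := by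
        have := hx'
        simp only [B, Set.mem_compl_iff, Metric.mem_ball, not_lt] at this
        rwa [dist_comm, dist_eq_norm] at this
      have hxx : r ^ 2 ≤ ‖x - x'‖ ^ 2 := by nlinarith [norm_nonneg (x - x')]
      rw [hg, mul_assoc]
      refine mul_le_mul_of_nonneg_left ?_ hC0.le
      rw [← Real.exp_add]
      apply Real.exp_le_exp.mpr
      have h4 : (0 : ℝ) < 4 * σ ^ 2 := by positivity
      rw [← sub_nonneg]
      have heq : -r ^ 2 / (4 * σ ^ 2) + -(1 / (4 * σ ^ 2)) * ‖x - x'‖ ^ 2 -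
          -‖x - x'‖ ^ 2 / (2 * σ ^ 2) = (‖x - x'‖ ^ 2 - r ^ 2) / (4 * σ ^ 2) := by
        field_simp; ring
      rw [heq]
      exact div_nonneg (by linarith) h4.le
    have h2 : ∫ x' in Bᶜ, C * rexp (-r ^ 2 / (4 * σ ^ 2)) *
        rexp (-(1 / (4 * σ ^ 2)) * ‖x - x'‖ ^ 2) ≤
        ∫ x', C * rexp (-r ^ 2 / (4 * σ ^ 2)) *
        rexp (-(1 / (4 * σ ^ 2)) * ‖x - x'‖ ^ 2) := by
      refine setIntegral_le_integral hmaj ?_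
      filter_upwards with x'; positivity
    have h3 : ∫ x', C * rexp (-r ^ 2 / (4 * σ ^ 2)) *
        rexp (-(1 / (4 * σ ^ 2)) * ‖x - x'‖ ^ 2) =
        (2 : ℝ) ^ ((n : ℝ) / 2) * rexp (-r ^ 2 / (4 * σ ^ 2)) := by
      rw [integral_const_mul, gauss_integral' n hb2 x]
      have h4 : π / (1 / (4 * σ ^ 2)) = 2 * (2 * π * σ ^ 2) := by field_simp; ring
      rw [h4, Real.mul_rpow (by norm_num) hbase.le, hC]
      rw [show (-(n : ℝ) / 2) = -((n : ℝ) / 2) by ring, Real.rpow_neg hbase.le]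
      field_simp
    calc t ≤ _ := h1
      _ ≤ _ := h2
      _ = _ := h3
      _ < _ := htail
  -- split integral
  have hsplit : (∫ x' in B, f x' * g x') + (∫ x' in Bᶜ, f x' * g x') =
      ∫ x', f x' * g x' := integral_add_compl measurableSet_ball hfg
  have hBg : (∫ x' in B, g x') = 1 - t := by
    have := integral_add_compl (measurableSet_ball (x := x) (ε := r)) hgint
    rw [hgtot] at this
    linarith [this]
  have hlow1 : ε * (1 - t) ≤ ∫ x' in B, f x' * g x' := by
    have : ∫ x' in B, ε * g x' ≤ ∫ x' in B, f x' * g x' := by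
      refine setIntegral_mono_on (hgint.const_mul ε).integrableOn hfg.integrableOn
        measurableSet_ball ?_
      intro x' hx'
      exact mul_le_mul_of_nonneg_right (hball x' hx') (hg0 x')
    rwa [integral_const_mul, hBg] at this
  have hlow2 : -t ≤ ∫ x' in Bᶜ, f x' * g x' := by
    have : ∫ x' in Bᶜ, (-1 : ℝ) * g x' ≤ ∫ x' in Bᶜ, f x' * g x' := by
      refine setIntegral_mono_on (hgint.const_mul (-1)).integrableOn hfg.integrableOn
        measurableSet_ball.compl ?_
      intro x' hx'
      refine mul_le_mul_of_nonneg_right ?_ (hg0 x')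
      linarith [abs_le.mp (hbd x')]
    rwa [integral_const_mul, neg_one_mul] at this
  have hprod : t * (2 * (1 + ε)) < ε := (lt_div_iff₀ (by positivity)).mp htail2
  have hfin : 0 < ∫ x', f x' * g x' := by
    rw [← hsplit]
    nlinarith [hlow1, hlow2, ht0, hε]
  convert hfin using 2

/-- Density separation: for any margin ε and radius r there is a Gaussian
bandwidth σ such that the MMD influence is positive wherever p dominates q by ε on the
ball of radius r, and negative in the symmetric case. -/
theorem density_separation
    (n : ℕ) (hn : 1 ≤ n)
    (p q : EuclideanSpace ℝ (Fin n) → ℝ)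
    (hpm : Measurable p) (hqm : Measurable q)
    (hp0 : ∀ x', 0 ≤ p x') (hq0 : ∀ x', 0 ≤ q x')
    (hp1 : ∫ x', p x' = 1) (hq1 : ∫ x', q x' = 1)
    (hbd : ∀ x', |p x' - q x'| ≤ 1) :
    ∀ ε > (0 : ℝ), ∀ r > (0 : ℝ), ∃ σ > (0 : ℝ),
      ∀ x : EuclideanSpace ℝ (Fin n),
        ((∀ x' ∈ Metric.ball x r, ε ≤ p x' - q x') →
          0 < ∫ x', (p x' - q x') *
            ((2 * π * σ ^ 2) ^ (-(n : ℝ) / 2) * Real.exp (-‖x - x'‖ ^ 2 / (2 * σ ^ 2)))) ∧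
        ((∀ x' ∈ Metric.ball x r, p x' - q x' ≤ -ε) →
          (∫ x', (p x' - q x') *
            ((2 * π * σ ^ 2) ^ (-(n : ℝ) / 2) * Real.exp (-‖x - x'‖ ^ 2 / (2 * σ ^ 2)))) < 0) := by
  intro ε hε r hr
  set c : ℝ := ε / (2 * (1 + ε)) with hc
  have hc0 : 0 < c := by positivity
  set A : ℝ := (2 : ℝ) ^ ((n : ℝ) / 2) with hA
  have hA0 : 0 < A := rpow_pos_of_pos (by norm_num) _
  set σ : ℝ := Real.sqrt (c * r ^ 2 / (8 * A)) with hσdef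
  have hσ : 0 < σ := Real.sqrt_pos.mpr (by positivity)
  have hσ2 : σ ^ 2 = c * r ^ 2 / (8 * A) := Real.sq_sqrt (by positivity)
  -- tail smallness
  have htail : A * rexp (-r ^ 2 / (4 * σ ^ 2)) < c := by
    have hy : (0 : ℝ) < r ^ 2 / (4 * σ ^ 2) := by positivity
    have hexp : rexp (-(r ^ 2 / (4 * σ ^ 2))) < (r ^ 2 / (4 * σ ^ 2))⁻¹ := by
      rw [Real.exp_neg]
      exact inv_strictAnti₀ hy (lt_of_lt_of_le (lt_add_one _) (Real.add_one_le_exp _))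
    have hinv : (r ^ 2 / (4 * σ ^ 2))⁻¹ = 4 * σ ^ 2 / r ^ 2 := by
      rw [inv_div]
    have hval : A * (4 * σ ^ 2 / r ^ 2) = c / 2 := by
      rw [hσ2]; field_simp; ring
    have : A * rexp (-(r ^ 2 / (4 * σ ^ 2))) < c / 2 := by
      calc A * rexp (-(r ^ 2 / (4 * σ ^ 2))) < A * (r ^ 2 / (4 * σ ^ 2))⁻¹ :=
            (mul_lt_mul_iff_right₀ hA0).mpr hexp
        _ = c / 2 := by rw [hinv, hval]
    rw [show -r ^ 2 / (4 * σ ^ 2) = -(r ^ 2 / (4 * σ ^ 2)) by ring]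
    linarith
  refine ⟨σ, hσ, fun x => ⟨fun hdom => ?_, fun hdom => ?_⟩⟩
  · exact key_pos n hσ hr hε htail (p - q) (hpm.sub hqm)
      (by simpa using hbd) x (by simpa using hdom)
  · have h := key_pos n hσ hr hε htail (q - p) (hqm.sub hpm)
      (fun x' => by simpa [abs_sub_comm] using hbd x') x
      (fun x' hx' => by have := hdom x' hx'; simp only [Pi.sub_apply]; linarith)
    have heq : (∫ x', (p x' - q x') *
        ((2 * π * σ ^ 2) ^ (-(n : ℝ) / 2) * rexp (-‖x - x'‖ ^ 2 / (2 * σ ^ 2)))) =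
        -∫ x', (q - p) x' *
        ((2 * π * σ ^ 2) ^ (-(n : ℝ) / 2) * rexp (-‖x - x'‖ ^ 2 / (2 * σ ^ 2))) := by
      rw [← integral_neg]
      congr 1; funext x'; simp only [Pi.sub_apply]; ring
    rw [heq]
    linarith
end

section
/- Let n ≥ 1, σ > 0, x ∈ ℝⁿ and r > 0 with n·σ² < r². Then ∫_{B(x, r)} k_σ(x, x') dx' ≥ 1 − 2nσ⁴/(r² − nσ²)². -/
/-!
Let `Y` be a random vector whose coordinates are independent `N(0, σ²)` variables; the integral
is `P(‖Y‖ < r)`. The variable `‖Y‖² = ∑ Yᵢ²` has mean `nσ²` and, by independence, variance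
`n (E Y₁⁴ - σ⁴) = 2nσ⁴`, the fourth moment `3σ⁴` coming from Gaussian integration by parts.
Chebyshev's inequality bounds `P(‖Y‖² ≥ r²)` by `2nσ⁴ / (r² - nσ²)²`.
-/

open MeasureTheory ProbabilityTheory Real

open scoped NNReal ENNReal

namespace MeasureTheory

theorem lintegral_fin_nat_prod_eq_prod {n : ℕ} {E : Type*} {mE : MeasurableSpace E}
    {μ : Fin n → Measure E} [∀ i, SigmaFinite (μ i)] {f : Fin n → E → ℝ≥0∞}
    (hf : ∀ i, Measurable (f i)) :
    ∫⁻ x, ∏ i, f i (x i) ∂Measure.pi μ = ∏ i, ∫⁻ x, f i x ∂μ i := by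
  induction n with
  | zero => simp
  | succ n ih =>
    rw [← ((measurePreserving_piFinSuccAbove μ 0).symm).lintegral_comp_emb
      (MeasurableEquiv.measurableEmbedding _)]
    simp_rw [MeasurableEquiv.piFinSuccAbove_symm_apply, Fin.insertNthEquiv,
      Fin.prod_univ_succ, Fin.insertNth_zero, Equiv.coe_fn_mk, Fin.cons_succ,
      Fin.zero_succAbove, cast_eq, Fin.cons_zero]
    rw [lintegral_prod_mul (g := fun y : Fin n → E => ∏ i, f i.succ (y i)) (hf 0).aemeasurable,
      ih fun i => hf _]
    exact Finset.aemeasurable_fun_prod _ fun i _ =>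
      ((hf _).comp (measurable_pi_apply i)).aemeasurable

theorem lintegral_fintype_prod_eq_prod {ι : Type*} [Fintype ι] {E : Type*}
    {mE : MeasurableSpace E} {μ : ι → Measure E} [∀ i, SigmaFinite (μ i)]
    {f : ι → E → ℝ≥0∞} (hf : ∀ i, Measurable (f i)) :
    ∫⁻ x, ∏ i, f i (x i) ∂Measure.pi μ = ∏ i, ∫⁻ x, f i x ∂μ i := by
  let e := (Fintype.equivFin ι).symm
  rw [← (measurePreserving_piCongrLeft _ e).lintegral_comp_emb
    (MeasurableEquiv.measurableEmbedding _)]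
  simp_rw [← e.prod_comp, MeasurableEquiv.coe_piCongrLeft, Equiv.piCongrLeft_apply_apply]
  exact lintegral_fin_nat_prod_eq_prod fun i => hf _

theorem Measure.pi_withDensity {ι : Type*} [Fintype ι] {E : Type*} {mE : MeasurableSpace E}
    (μ : ι → Measure E) [∀ i, SigmaFinite (μ i)] {f : ι → E → ℝ≥0∞} (hf : ∀ i, Measurable (f i))
    [∀ i, SigmaFinite ((μ i).withDensity (f i))] :
    Measure.pi (fun i => (μ i).withDensity (f i)) =
      (Measure.pi μ).withDensity fun x => ∏ i, f i (x i) := by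
  refine Measure.pi_eq fun s hs => ?_
  rw [withDensity_apply _ (MeasurableSet.univ_pi hs), Measure.restrict_pi_pi,
    lintegral_fintype_prod_eq_prod hf]
  simp_rw [withDensity_apply _ (hs _)]

end MeasureTheory

lemma EuclideanSpace.setIntegral_ball_comp_norm_sub_sq {ι : Type*} [Fintype ι]
    (x : EuclideanSpace ℝ ι) {r : ℝ} (hr : 0 ≤ r) (g : ℝ → ℝ) :
    ∫ x' in Metric.ball x r, g (‖x - x'‖ ^ 2) =
      ∫ y in {y : ι → ℝ | ∑ i, y i ^ 2 < r ^ 2}, g (∑ i, y i ^ 2) := by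
  have hsub : (fun y => x - y) ⁻¹' Metric.ball x r = Metric.ball 0 r := by
    ext y
    simp [dist_eq_norm]
  rw [← (Measure.measurePreserving_sub_left volume x).setIntegral_preimage_emb
    (Homeomorph.subLeft x).measurableEmbedding, hsub, EuclideanSpace.ball_zero_eq r hr,
    ← (PiLp.volume_preserving_toLp ι).setIntegral_preimage_emb
      (MeasurableEquiv.toLp 2 (ι → ℝ)).measurableEmbedding]
  simp [EuclideanSpace.real_norm_sq_eq]

namespace ProbabilityTheory

lemma hasDerivAt_gaussianPDFReal (μ : ℝ) (v : ℝ≥0) (x : ℝ) :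
    HasDerivAt (gaussianPDFReal μ v) (-((x - μ) / v) * gaussianPDFReal μ v x) x := by
  have h : HasDerivAt (fun x => -(x - μ) ^ 2 / (2 * v)) (-((x - μ) / v)) x := by
    refine ((((hasDerivAt_id x).sub_const μ).pow 2).neg.div_const (2 * (v : ℝ))).congr_deriv ?_
    simp only [id]
    ring
  rw [gaussianPDFReal_def]
  exact (h.exp.const_mul (√(2 * π * v))⁻¹).congr_deriv (by ring)

lemma integrable_pow_gaussianReal (μ : ℝ) (v : ℝ≥0) (k : ℕ) :
    Integrable (fun x => x ^ k) (gaussianReal μ v) := by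
  refine (integrable_norm_iff (by fun_prop)).1 ?_
  simpa using (memLp_id_gaussianReal (μ := μ) (v := v) k).integrable_norm_pow'

lemma integrable_pow_mul_gaussianPDFReal (μ : ℝ) {v : ℝ≥0} (hv : v ≠ 0) (k : ℕ) :
    Integrable (fun x => x ^ k * gaussianPDFReal μ v x) := by
  have := integrable_pow_gaussianReal μ v k
  rw [gaussianReal_of_var_ne_zero _ hv, integrable_withDensity_iff_integrable_smul'
    (measurable_gaussianPDF μ v) (ae_of_all _ fun _ => gaussianPDF_lt_top)] at this
  simpa [mul_comm] using this

lemma integral_pow_add_two_gaussianReal (v : ℝ≥0) (m : ℕ) :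
    ∫ x, x ^ (m + 2) ∂gaussianReal 0 v = (m + 1) * v * ∫ x, x ^ m ∂gaussianReal 0 v := by
  rcases eq_or_ne v 0 with rfl | hv
  · simp
  simp only [integral_gaussianReal_eq_integral_smul hv, smul_eq_mul]
  have hu (x : ℝ) : HasDerivAt (fun x => x ^ (m + 1)) ((m + 1) * x ^ m) x := by
    simpa using hasDerivAt_pow (m + 1) x
  have hw (x : ℝ) : HasDerivAt (fun x => -(v : ℝ) * gaussianPDFReal 0 v x)
      (x * gaussianPDFReal 0 v x) x := by
    refine ((hasDerivAt_gaussianPDFReal 0 v x).const_mul (-(v : ℝ))).congr_deriv ?_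
    field_simp
    rw [sub_zero]
  have hint (k : ℕ) (c : ℝ) : Integrable (fun x => c * (x ^ k * gaussianPDFReal 0 v x)) :=
    (integrable_pow_mul_gaussianPDFReal 0 hv k).const_mul c
  have parts := integral_mul_deriv_eq_deriv_mul_of_integrable (fun x _ => hu x) (fun x _ => hw x)
    ((hint (m + 2) 1).congr (ae_of_all _ fun x => by simp only [Pi.mul_apply]; ring))
    ((hint m (-((m + 1) * v))).congr (ae_of_all _ fun x => by simp only [Pi.mul_apply]; ring))
    ((hint (m + 1) (-v)).congr (ae_of_all _ fun x => by simp only [Pi.mul_apply]; ring))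
  calc ∫ x, gaussianPDFReal 0 v x * x ^ (m + 2)
      = ∫ x, x ^ (m + 1) * (x * gaussianPDFReal 0 v x) := by congr with x; ring
    _ = -∫ x, (m + 1) * x ^ m * (-v * gaussianPDFReal 0 v x) := parts
    _ = (m + 1) * v * ∫ x, gaussianPDFReal 0 v x * x ^ m := by
      rw [← integral_neg, ← integral_const_mul]
      congr with x
      ring

lemma integral_sq_gaussianReal (v : ℝ≥0) : ∫ x, x ^ 2 ∂gaussianReal 0 v = v := by
  simpa using integral_pow_add_two_gaussianReal v 0

lemma integral_pow_four_gaussianReal (v : ℝ≥0) : ∫ x, x ^ 4 ∂gaussianReal 0 v = 3 * v ^ 2 := by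
  rw [integral_pow_add_two_gaussianReal v 2, integral_sq_gaussianReal]
  push_cast
  ring

lemma memLp_sq_gaussianReal (μ : ℝ) (v : ℝ≥0) : MemLp (fun x => x ^ 2) 2 (gaussianReal μ v) :=
  (memLp_two_iff_integrable_sq (by fun_prop)).2 <| by
    simpa [← pow_mul] using integrable_pow_gaussianReal μ v 4

lemma variance_sq_gaussianReal (v : ℝ≥0) : Var[fun x => x ^ 2; gaussianReal 0 v] = 2 * v ^ 2 := by
  rw [variance_eq_sub (memLp_sq_gaussianReal 0 v)]
  simp only [Pi.pow_apply, ← pow_mul, integral_pow_four_gaussianReal, integral_sq_gaussianReal]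
  ring

variable {ι : Type*} [Fintype ι]

lemma integral_sum_sq_pi_gaussianReal (v : ℝ≥0) :
    ∫ x, ∑ i, x i ^ 2 ∂Measure.pi (fun _ : ι => gaussianReal 0 v) = Fintype.card ι * v := by
  rw [integral_finsetSum (f := fun i (x : ι → ℝ) => x i ^ 2) _ fun i _ =>
    integrable_comp_eval (μ := fun _ : ι => gaussianReal 0 v) (f := fun x : ℝ => x ^ 2)
      (integrable_pow_gaussianReal 0 v 2)]
  simp [integral_comp_eval (μ := fun _ : ι => gaussianReal 0 v) (f := fun x : ℝ => x ^ 2)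
    (by fun_prop), integral_sq_gaussianReal]

lemma variance_sum_sq_pi_gaussianReal (v : ℝ≥0) :
    Var[fun x => ∑ i, x i ^ 2; Measure.pi (fun _ : ι => gaussianReal 0 v)] =
      Fintype.card ι * (2 * v ^ 2) := by
  have := variance_sum_pi (μ := fun _ : ι => gaussianReal 0 v) (X := fun _ x => x ^ 2)
    fun _ => memLp_sq_gaussianReal 0 v
  simp only [variance_sq_gaussianReal, Finset.sum_const, Finset.card_univ, nsmul_eq_mul] at this
  rw [← this]
  congr with x
  simp

lemma measureReal_le_sum_sq_pi_gaussianReal_le (v : ℝ≥0) {t : ℝ}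
    (ht : Fintype.card ι * v < t) :
    (Measure.pi fun _ : ι => gaussianReal 0 v).real {x | t ≤ ∑ i, x i ^ 2} ≤
      2 * Fintype.card ι * v ^ 2 / (t - Fintype.card ι * v) ^ 2 := by
  have hS : MemLp (fun x : ι → ℝ => ∑ i, x i ^ 2) 2 (Measure.pi fun _ : ι => gaussianReal 0 v) :=
    memLp_finsetSum _ fun i _ =>
      (memLp_sq_gaussianReal 0 v).comp_measurePreserving (measurePreserving_eval _ i)
  have hcheb := meas_ge_le_variance_div_sq hS (sub_pos.2 ht)
  rw [integral_sum_sq_pi_gaussianReal, variance_sum_sq_pi_gaussianReal] at hcheb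
  refine ENNReal.toReal_le_of_le_ofReal (by positivity) ((measure_mono ?_).trans
    (hcheb.trans_eq (by ring_nf)))
  exact fun x (hx : t ≤ _) => (sub_le_sub_right hx _).trans (le_abs_self _)

lemma pi_gaussianReal_eq_withDensity {v : ℝ≥0} (hv : v ≠ 0) :
    Measure.pi (fun _ : ι => gaussianReal 0 v) =
      volume.withDensity fun x => ∏ i, gaussianPDF 0 v (x i) := by
  have : IsProbabilityMeasure (volume.withDensity (gaussianPDF 0 v)) :=
    gaussianReal_of_var_ne_zero 0 hv ▸ inferInstance
  simp_rw [gaussianReal_of_var_ne_zero 0 hv]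
  exact Measure.pi_withDensity _ fun _ => measurable_gaussianPDF 0 v

lemma measureReal_pi_gaussianReal {v : ℝ≥0} (hv : v ≠ 0) {s : Set (ι → ℝ)}
    (hs : MeasurableSet s) :
    (Measure.pi fun _ : ι => gaussianReal 0 v).real s =
      ∫ x in s, ∏ i, gaussianPDFReal 0 v (x i) := by
  have hmeas : Measurable fun x : ι → ℝ => ∏ i, gaussianPDFReal 0 v (x i) :=
    Finset.measurable_fun_prod _ fun i _ =>
      (measurable_gaussianPDFReal 0 v).comp (measurable_pi_apply i)
  rw [pi_gaussianReal_eq_withDensity hv, measureReal_def, withDensity_apply _ hs,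
    integral_eq_lintegral_of_nonneg_ae (ae_of_all _ fun x =>
      Finset.prod_nonneg fun i _ => gaussianPDFReal_nonneg 0 v (x i)) hmeas.aestronglyMeasurable]
  simp_rw [gaussianPDF, ENNReal.ofReal_prod_of_nonneg fun i _ => gaussianPDFReal_nonneg 0 v _]

lemma prod_gaussianPDFReal (v : ℝ≥0) (x : ι → ℝ) :
    ∏ i, gaussianPDFReal 0 v (x i) =
      (2 * π * v) ^ (-(Fintype.card ι : ℝ) / 2) * exp (-(∑ i, x i ^ 2) / (2 * v)) := by
  simp_rw [gaussianPDFReal, Finset.prod_mul_distrib, Finset.prod_const, ← Real.exp_sum,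
    sub_zero, Finset.card_univ, ← Finset.sum_div, Finset.sum_neg_distrib]
  rw [sqrt_eq_rpow, ← rpow_neg (by positivity), ← rpow_natCast, ← rpow_mul (by positivity)]
  ring_nf

end ProbabilityTheory

theorem gaussian_ball_mass_lower_bound_general
    (n : ℕ) (σ : ℝ) (hσ : 0 < σ)
    (x : EuclideanSpace ℝ (Fin n)) (r : ℝ) (hr : 0 < r)
    (h : (n : ℝ) * σ ^ 2 < r ^ 2) :
    1 - 2 * n * σ ^ 4 / (r ^ 2 - n * σ ^ 2) ^ 2 ≤
      ∫ x' in Metric.ball x r,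
        (2 * π * σ ^ 2) ^ (-(n : ℝ) / 2) * Real.exp (-‖x - x'‖ ^ 2 / (2 * σ ^ 2)) := by
  set v : ℝ≥0 := (σ ^ 2).toNNReal
  have hv : (v : ℝ) = σ ^ 2 := Real.coe_toNNReal _ (sq_nonneg σ)
  have hv0 : v ≠ 0 := by simpa [v] using hσ.ne'
  have hS : MeasurableSet {y : Fin n → ℝ | r ^ 2 ≤ ∑ i, y i ^ 2} :=
    measurableSet_le (by fun_prop) (by fun_prop)
  have htail : (Measure.pi fun _ : Fin n => gaussianReal 0 v).real
      {y | r ^ 2 ≤ ∑ i, y i ^ 2} ≤ 2 * n * σ ^ 4 / (r ^ 2 - n * σ ^ 2) ^ 2 := by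
    simpa [hv, ← pow_mul] using
      measureReal_le_sum_sq_pi_gaussianReal_le (ι := Fin n) v (t := r ^ 2) (by simpa [hv] using h)
  have hmass : (Measure.pi fun _ : Fin n => gaussianReal 0 v).real
      {y | r ^ 2 ≤ ∑ i, y i ^ 2}ᶜ = ∫ x' in Metric.ball x r,
        (2 * π * σ ^ 2) ^ (-(n : ℝ) / 2) * Real.exp (-‖x - x'‖ ^ 2 / (2 * σ ^ 2)) := by
    rw [measureReal_pi_gaussianReal hv0 hS.compl,
      EuclideanSpace.setIntegral_ball_comp_norm_sub_sq x hr.le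
        fun t => (2 * π * σ ^ 2) ^ (-(n : ℝ) / 2) * Real.exp (-t / (2 * σ ^ 2))]
    simp_rw [prod_gaussianPDFReal, Fintype.card_fin, hv, Set.compl_ofPred, not_le]
  rw [← hmass, probReal_compl_eq_one_sub hS]
  gcongr

/-- Chebyshev-type lower bound on the Gaussian kernel mass of a ball. -/
theorem gaussian_ball_mass_lower_bound
    (n : ℕ) (hn : 1 ≤ n) (σ : ℝ) (hσ : 0 < σ)
    (x : EuclideanSpace ℝ (Fin n)) (r : ℝ) (hr : 0 < r)
    (h : (n : ℝ) * σ ^ 2 < r ^ 2) :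
    1 - 2 * n * σ ^ 4 / (r ^ 2 - n * σ ^ 2) ^ 2 ≤
      ∫ x' in Metric.ball x r,
        (2 * π * σ ^ 2) ^ (-(n : ℝ) / 2) * Real.exp (-‖x - x'‖ ^ 2 / (2 * σ ^ 2)) :=
  gaussian_ball_mass_lower_bound_general n σ hσ x r hr h
end

section
/- Let ν be a probability measure on X, let κ and η be Markov kernels from X to Y, let x₀ ∈ X with {x₀} measurable and ν({x₀}) = 0, and let y₀ ∈ Y. Let η' be the Markov kernel with η'(x₀) = δ_{y₀} and η'(x) = η(x) for x ≠ x₀, and assume m(x) := MCMD_{κ,η}(x) is integrable with respect to ν. For ε ∈ (0, 1] define E-MCMD(ε) := ∫ ‖μ^κ(x) − μ^{η'}(x)‖_{H_Y} d((1−ε)ν + εδ_{x₀})(x), and set E-MCMD(0) := ∫ m dν. Then for every ε ∈ (0, 1], E-MCMD(ε) = (1−ε)·∫ m dν + ε·‖μ^κ(x₀) − φ(y₀)‖_{H_Y}, and consequently the influence −lim_{ε→0⁺} (E-MCMD(ε) − E-MCMD(0))/ε exists and equals ∫ m dν − ‖μ^κ(x₀) − φ(y₀)‖_{H_Y}; i.e.,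 up to an additive constant independent of (x₀, y₀), the E-MCMD influence of the point (x₀, y₀) is −‖μ^κ(x₀) − φ(y₀)‖_{H_Y}. -/
open MeasureTheory ProbabilityTheory Filter Topology
open scoped ENNReal

/-!
Off `x₀` the perturbed kernel `η'` agrees with `η`, and at `x₀` its mean embedding is `φ y₀`, so
the E-MCMD integrand is `m` updated at `x₀` to `‖μ^κ(x₀) - φ(y₀)‖`. Integrating against the mixture
`(1 - ε) ν + ε δ_{x₀}`, the update is invisible to `ν` because `ν {x₀} = 0`, while `δ_{x₀}` only sees
the updated value. Hence `E-MCMD(ε)` is affine in `ε` and the influence is its constant slope.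
-/

namespace MeasureTheory

theorem ae_eq_dirac_of_measurableSet_singleton {α β : Type*} [MeasurableSpace α] {a : α}
    (ha : MeasurableSet {a}) (f : α → β) : f =ᵐ[Measure.dirac a] fun _ => f a := by
  filter_upwards [(ae_dirac_iff ha).2 rfl] with x hx
  rw [hx]

theorem update_ae_eq_of_measure_singleton_eq_zero {α β : Type*} [MeasurableSpace α]
    [DecidableEq α] {μ : Measure α} {a : α} (ha : μ {a} = 0) (f : α → β) (b : β) :
    Function.update f a b =ᵐ[μ] f := by
  refine measure_mono_null (fun x hx => ?_) ha
  by_contra h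
  exact hx (Function.update_of_ne h _ _)

variable {α E : Type*} [MeasurableSpace α] [NormedAddCommGroup E] [NormedSpace ℝ E]
  [CompleteSpace E]

theorem integral_dirac_of_measurableSet_singleton {a : α} (ha : MeasurableSet {a}) (f : α → E) :
    ∫ x, f x ∂Measure.dirac a = f a := by
  simp [integral_congr_ae (ae_eq_dirac_of_measurableSet_singleton ha f)]

theorem integral_dirac_of_measurable [MeasurableSpace E] [BorelSpace E] {f : α → E}
    (hf : Measurable f) (a : α) : ∫ x, f x ∂Measure.dirac a = f a := by
  simp [integral_congr_ae (ae_eq_dirac' hf)]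

theorem integral_smul_add_smul_dirac {μ : Measure α} {g : α → E} (hg : Integrable g μ) {a : α}
    (ha : MeasurableSet {a}) {s t : ℝ≥0∞} (hs : s ≠ ∞) (ht : t ≠ ∞) :
    ∫ x, g x ∂(s • μ + t • Measure.dirac a) = s.toReal • ∫ x, g x ∂μ + t.toReal • g a := by
  have hga : Integrable g (Measure.dirac a) :=
    (integrable_const (g a)).congr (ae_eq_dirac_of_measurableSet_singleton ha g).symm
  rw [integral_add_measure (hg.smul_measure hs) (hga.smul_measure ht), integral_smul_measure,
    integral_smul_measure, integral_dirac_of_measurableSet_singleton ha]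

end MeasureTheory

namespace ProbabilityTheory.Kernel

theorem integral_eq_update_of_eq_dirac {X Y E : Type*} [MeasurableSpace X] [MeasurableSpace Y]
    [NormedAddCommGroup E] [NormedSpace ℝ E] [CompleteSpace E] [MeasurableSpace E] [BorelSpace E]
    [DecidableEq X] {φ : Y → E} (hφ : Measurable φ) {η η' : Kernel X Y} {x₀ : X} {y₀ : Y}
    (h₀ : η' x₀ = Measure.dirac y₀) (h : ∀ x ≠ x₀, η' x = η x) :
    (fun x => ∫ y, φ y ∂η' x) = Function.update (fun x => ∫ y, φ y ∂η x) x₀ (φ y₀) := by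
  ext x
  rcases eq_or_ne x x₀ with rfl | hx
  · simp [h₀, integral_dirac_of_measurable hφ]
  · simp [h x hx, hx]

end ProbabilityTheory.Kernel

theorem tendsto_div_nhdsGT_of_eq_add_mul {F : ℝ → ℝ} {a d : ℝ} (ha : 0 < a)
    (hF : ∀ ε ∈ Set.Ioc 0 a, F ε = F 0 + ε * d) :
    Tendsto (fun ε => (F ε - F 0) / ε) (𝓝[>] 0) (𝓝 d) := by
  refine tendsto_const_nhds.congr' ?_
  filter_upwards [Ioc_mem_nhdsGT ha] with ε hε
  rw [hF ε hε, add_sub_cancel_left, mul_div_cancel_left₀ _ hε.1.ne']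

theorem emcmd_influence_general
    {X Y : Type*} [MeasurableSpace X] [MeasurableSpace Y]
    {H : Type*} [NormedAddCommGroup H] [InnerProductSpace ℝ H] [CompleteSpace H]
    [MeasurableSpace H] [BorelSpace H]
    (φ : Y → H) (hφ : Measurable φ)
    (ν : Measure X)
    (κ η η' : Kernel X Y)
    (x₀ : X) (hx₀m : MeasurableSet {x₀}) (hx₀ : ν {x₀} = 0) (y₀ : Y)
    (hη'₀ : η' x₀ = Measure.dirac y₀)
    (hη' : ∀ x ≠ x₀, η' x = η x)
    (m : X → ℝ)
    (hm : ∀ x, m x = ‖(∫ y, φ y ∂(κ x)) - ∫ y, φ y ∂(η x)‖)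
    (hmint : Integrable m ν)
    (EMCMD : ℝ → ℝ)
    (hEMCMD : ∀ ε ∈ Set.Ioc (0 : ℝ) 1,
      EMCMD ε = ∫ x, ‖(∫ y, φ y ∂(κ x)) - ∫ y, φ y ∂(η' x)‖
        ∂(ENNReal.ofReal (1 - ε) • ν + ENNReal.ofReal ε • Measure.dirac x₀))
    (hEMCMD0 : EMCMD 0 = ∫ x, m x ∂ν) :
    (∀ ε ∈ Set.Ioc (0 : ℝ) 1,
      EMCMD ε = (1 - ε) * (∫ x, m x ∂ν) + ε * ‖(∫ y, φ y ∂(κ x₀)) - φ y₀‖) ∧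
    Tendsto (fun ε : ℝ => -((EMCMD ε - EMCMD 0) / ε)) (𝓝[>] (0 : ℝ))
      (𝓝 ((∫ x, m x ∂ν) - ‖(∫ y, φ y ∂(κ x₀)) - φ y₀‖)) := by
  classical
  set c₀ := ‖(∫ y, φ y ∂(κ x₀)) - φ y₀‖
  have hupdate : (fun x => ‖(∫ y, φ y ∂(κ x)) - ∫ y, φ y ∂(η' x)‖) = Function.update m x₀ c₀ := by
    have hμη' : ∀ x, ∫ y, φ y ∂(η' x) =
        Function.update (fun x => ∫ y, φ y ∂(η x)) x₀ (φ y₀) x :=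
      congrFun (Kernel.integral_eq_update_of_eq_dirac hφ hη'₀ hη')
    ext x
    rcases eq_or_ne x x₀ with rfl | hx
    · simp [hμη', c₀]
    · simp [hμη', hx, hm]
  have hm_ae := update_ae_eq_of_measure_singleton_eq_zero hx₀ m c₀
  have closed_form : ∀ ε ∈ Set.Ioc (0 : ℝ) 1,
      EMCMD ε = (1 - ε) * (∫ x, m x ∂ν) + ε * c₀ := by
    intro ε ⟨hε0, hε1⟩
    rw [hEMCMD ε ⟨hε0, hε1⟩, hupdate, integral_smul_add_smul_dirac (hmint.congr hm_ae.symm) hx₀m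
      ENNReal.ofReal_ne_top ENNReal.ofReal_ne_top, integral_congr_ae hm_ae,
      Function.update_self, ENNReal.toReal_ofReal (sub_nonneg.2 hε1),
      ENNReal.toReal_ofReal hε0.le, smul_eq_mul, smul_eq_mul]
  refine ⟨closed_form, ?_⟩
  have hslope := tendsto_div_nhdsGT_of_eq_add_mul (F := EMCMD) (d := c₀ - ∫ x, m x ∂ν) one_pos
    fun ε hε => by rw [closed_form ε hε, hEMCMD0]; ring
  simpa only [neg_sub] using hslope.neg

/-- closed form of the perturbed E-MCMD and its influence, which up to an
additive constant is −‖μ^κ(x₀) − φ(y₀)‖. -/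
theorem emcmd_influence
    {X Y : Type*} [MeasurableSpace X] [MeasurableSpace Y]
    {H : Type*} [NormedAddCommGroup H] [InnerProductSpace ℝ H] [CompleteSpace H]
    [MeasurableSpace H] [BorelSpace H]
    (φ : Y → H) (hφ : Measurable φ) (C : ℝ) (hC : ∀ y, ‖φ y‖ ≤ C)
    (ν : Measure X) [IsProbabilityMeasure ν]
    (κ η η' : Kernel X Y) [IsMarkovKernel κ] [IsMarkovKernel η] [IsMarkovKernel η']
    (x₀ : X) (hx₀m : MeasurableSet {x₀}) (hx₀ : ν {x₀} = 0) (y₀ : Y)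
    (hη'₀ : η' x₀ = Measure.dirac y₀)
    (hη' : ∀ x ≠ x₀, η' x = η x)
    (m : X → ℝ)
    (hm : ∀ x, m x = ‖(∫ y, φ y ∂(κ x)) - ∫ y, φ y ∂(η x)‖)
    (hmint : Integrable m ν)
    (EMCMD : ℝ → ℝ)
    (hEMCMD : ∀ ε ∈ Set.Ioc (0 : ℝ) 1,
      EMCMD ε = ∫ x, ‖(∫ y, φ y ∂(κ x)) - ∫ y, φ y ∂(η' x)‖
        ∂(ENNReal.ofReal (1 - ε) • ν + ENNReal.ofReal ε • Measure.dirac x₀))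
    (hEMCMD0 : EMCMD 0 = ∫ x, m x ∂ν) :
    (∀ ε ∈ Set.Ioc (0 : ℝ) 1,
      EMCMD ε = (1 - ε) * (∫ x, m x ∂ν) + ε * ‖(∫ y, φ y ∂(κ x₀)) - φ y₀‖) ∧
    Tendsto (fun ε : ℝ => -((EMCMD ε - EMCMD 0) / ε)) (𝓝[>] (0 : ℝ))
      (𝓝 ((∫ x, m x ∂ν) - ‖(∫ y, φ y ∂(κ x₀)) - φ y₀‖)) :=
  emcmd_influence_general φ hφ ν κ η η' x₀ hx₀m hx₀ y₀ hη'₀ hη' m hm hmint EMCMD hEMCMD hEMCMD0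
end
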